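/- Let α, β, γ ∈ (0, π/2], δ ∈ (0, π/4], X = cos α cos β cos γ sin(2δ). Then 1 + ((cos²α + cos²β cos²γ - 1)sin²(2δ) - X²)/(1+X)² - [1 + ((cos²α - cos²β - cos²γ + 2cos²β cos²γ)sin²(2δ) - X²)/(1+X)² - 1] = 1 - sin²β·sin²γ·sin²(2δ)/(1+X)² ≥ 0. -/

import Mathlib

/-!
The two Bell quantities share the denominator `(1 + X)²` and the term `-X²`, so their difference
is `1 + ΔA sin²(2δ) / (1 + X)²`, and the difference `ΔA` of the angular coefficients factors as
`-(1 - cos²β)(1 - cos²γ) = -sin²β sin²γ`. On the given ranges all cosines and `sin (2δ)` are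
nonnegative, so `X ≥ 0`, hence `(1 + X)² ≥ 1 ≥ sin²β sin²γ sin²(2δ)`.
-/

section

open Real

lemma cos_sq_coeff_sub_cos_sq_coeff (a b c : ℝ) :
    (cos a ^ 2 + cos b ^ 2 * cos c ^ 2 - 1) -
        (cos a ^ 2 - cos b ^ 2 - cos c ^ 2 + 2 * cos b ^ 2 * cos c ^ 2) =
      -(sin b ^ 2 * sin c ^ 2) := by
  rw [sin_sq, sin_sq]
  ring

lemma sin_sq_mul_sin_sq_mul_sin_sq_le_one (x y z : ℝ) :
    sin x ^ 2 * sin y ^ 2 * sin z ^ 2 ≤ 1 :=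
  mul_le_one₀ (mul_le_one₀ (sin_sq_le_one x) (sq_nonneg _) (sin_sq_le_one y)) (sq_nonneg _)
    (sin_sq_le_one z)

lemma cos_nonneg_of_mem_Ioc {x : ℝ} (hx : x ∈ Set.Ioc 0 (π / 2)) : 0 ≤ cos x :=
  cos_nonneg_of_mem_Icc ⟨by linarith [hx.1, pi_pos], hx.2⟩

lemma sin_two_mul_nonneg_of_mem_Ioc {x : ℝ} (hx : x ∈ Set.Ioc 0 (π / 4)) : 0 ≤ sin (2 * x) :=
  sin_nonneg_of_nonneg_of_le_pi (by linarith [hx.1]) (by linarith [hx.2, pi_pos])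

end

lemma one_sub_div_sq_one_add_nonneg {S X : ℝ} (hS : S ≤ 1) (hX : 0 ≤ X) :
    0 ≤ 1 - S / (1 + X) ^ 2 := by
  have hD : 1 ≤ (1 + X) ^ 2 := one_le_pow₀ (by linarith)
  exact sub_nonneg.mpr (div_le_one_of_le₀ (hS.trans hD) (by positivity))

theorem ghzR_ggm_theorem1_computation (α β γ δ : ℝ)
    (hα : α ∈ Set.Ioc 0 (Real.pi / 2)) (hβ : β ∈ Set.Ioc 0 (Real.pi / 2))
    (hγ : γ ∈ Set.Ioc 0 (Real.pi / 2)) (hδ : δ ∈ Set.Ioc 0 (Real.pi / 4)) :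
    (1 + ((Real.cos α ^ 2 + Real.cos β ^ 2 * Real.cos γ ^ 2 - 1) *
            Real.sin (2 * δ) ^ 2 -
          (Real.cos α * Real.cos β * Real.cos γ * Real.sin (2 * δ)) ^ 2) /
          (1 + Real.cos α * Real.cos β * Real.cos γ * Real.sin (2 * δ)) ^ 2) -
        (1 + ((Real.cos α ^ 2 - Real.cos β ^ 2 - Real.cos γ ^ 2 +
            2 * Real.cos β ^ 2 * Real.cos γ ^ 2) * Real.sin (2 * δ) ^ 2 -
          (Real.cos α * Real.cos β * Real.cos γ * Real.sin (2 * δ)) ^ 2) /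
          (1 + Real.cos α * Real.cos β * Real.cos γ * Real.sin (2 * δ)) ^ 2 - 1) =
      1 - Real.sin β ^ 2 * Real.sin γ ^ 2 * Real.sin (2 * δ) ^ 2 /
        (1 + Real.cos α * Real.cos β * Real.cos γ * Real.sin (2 * δ)) ^ 2 ∧
    1 - Real.sin β ^ 2 * Real.sin γ ^ 2 * Real.sin (2 * δ) ^ 2 /
        (1 + Real.cos α * Real.cos β * Real.cos γ * Real.sin (2 * δ)) ^ 2 ≥ 0 := by
  refine ⟨?_, ?_⟩
  · linear_combination
      (Real.sin (2 * δ) ^ 2 /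
        (1 + Real.cos α * Real.cos β * Real.cos γ * Real.sin (2 * δ)) ^ 2) *
      cos_sq_coeff_sub_cos_sq_coeff α β γ
  · have hX : 0 ≤ Real.cos α * Real.cos β * Real.cos γ * Real.sin (2 * δ) :=
      mul_nonneg (mul_nonneg (mul_nonneg (cos_nonneg_of_mem_Ioc hα) (cos_nonneg_of_mem_Ioc hβ))
        (cos_nonneg_of_mem_Ioc hγ)) (sin_two_mul_nonneg_of_mem_Ioc hδ)
    exact one_sub_div_sq_one_add_nonneg (sin_sq_mul_sin_sq_mul_sin_sq_le_one β γ (2 * δ)) hX
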